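/- arXiv:2510.13572 — 6 statements merged into one kernel-verified Lean document; each statement's English description precedes it below -/
import Mathlib

section
/- Let S be a finite set and P an irreducible stochastic matrix on S, and let L_P be the set of probability measures on F_S consistent with P. Then |L_P| ≥ 2 if and only if P has at least two rows each of which contains some entry lying in the open interval (0,1). -/
/-!
A measure consistent with `P` only charges functions `f` with `P i (f i) > 0` for every `i`.
If every row except `i₀` is a point mass, such an `f` is fixed off `i₀`, so its mass is forced to be
`P i₀ (f i₀)`. Conversely, if rows `i₁ ≠ i₂` are both non-degenerate, pick `f` in the support of the
product measure and values `a ≠ f i₁`, `b ≠ f i₂` of positive probability. Adding `t` at `f` and at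
`f[i₁↦a, i₂↦b]` and removing `t` at `f[i₁↦a]` and `f[i₂↦b]` leaves every one-dimensional marginal
unchanged, and keeps the product measure nonnegative for small `t > 0`.
-/

open Finset

/-- A probability measure on the functions `S → S`, consistent with `P`
(a "grand coupling" of `P`, i.e. a member of `L_P`). -/
def IsCoupling {S : Type*} [Fintype S] [DecidableEq S] (μ : (S → S) → ℝ)
    (P : Matrix S S ℝ) : Prop :=
  (∀ f, 0 ≤ μ f) ∧ (∑ f, μ f = 1) ∧
    ∀ i j, (∑ f : S → S, if f i = j then μ f else 0) = P i j

section ProbabilityVector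

variable {α : Type*} [Fintype α] {v : α → ℝ}

lemma exists_pos_of_sum_eq_one (hsum : ∑ a, v a = 1) : ∃ a, 0 < v a := by
  obtain ⟨a, -, ha⟩ := exists_lt_of_sum_lt (s := univ) (f := 0) (g := v) (by simp [hsum])
  exact ⟨a, ha⟩

lemma exists_mem_Ioo_iff_forall_exists_ne_pos (hv : ∀ a, 0 ≤ v a) (hsum : ∑ a, v a = 1) :
    (∃ j, v j ∈ Set.Ioo 0 1) ↔ ∀ k, ∃ a ≠ k, 0 < v a := by
  constructor
  · rintro ⟨j, hj0, hj1⟩ k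
    by_contra! hk
    have hzero : ∀ a ≠ k, v a = 0 := fun a ha => (hk a ha).antisymm (hv a)
    have hvk : v k = 1 := by rwa [Fintype.sum_eq_single k hzero] at hsum
    by_cases hjk : j = k
    · subst hjk; linarith
    · linarith [hzero j hjk]
  · intro h
    obtain ⟨a, ha⟩ := exists_pos_of_sum_eq_one hsum
    obtain ⟨b, hba, hb⟩ := h a
    exact ⟨a, ha, hsum ▸ single_lt_sum hba (mem_univ a) (mem_univ b) hb fun k _ _ => hv k⟩

end ProbabilityVector

section Exchange

variable {ι α : Type*} [Fintype ι] [DecidableEq ι] [DecidableEq α]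

def exchange (f : ι → α) (i₁ : ι) (a : α) (i₂ : ι) (b : α) (t : ℝ) : (ι → α) → ℝ :=
  Pi.single f t - Pi.single (Function.update f i₁ a) t - Pi.single (Function.update f i₂ b) t
    + Pi.single (Function.update (Function.update f i₁ a) i₂ b) t

variable {f : ι → α} {i₁ i₂ : ι} {a b : α} {t : ℝ}

lemma exchange_apply_self (ha : a ≠ f i₁) (hb : b ≠ f i₂) : exchange f i₁ a i₂ b t f = t := by
  have h₁ : f ≠ Function.update f i₁ a := fun h => ha (by rw [h, Function.update_self])
  have h₂ : f ≠ Function.update f i₂ b := fun h => hb (by rw [h, Function.update_self])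
  have h₃ : f ≠ Function.update (Function.update f i₁ a) i₂ b :=
    fun h => hb (by rw [h, Function.update_self])
  simp [exchange, h₁, h₂, h₃]

lemma add_exchange_nonneg {μ : (ι → α) → ℝ} (hμ : ∀ g, 0 ≤ μ g) (h : i₁ ≠ i₂) (ha : a ≠ f i₁)
    (ht : 0 ≤ t) (ht₁ : t ≤ μ (Function.update f i₁ a)) (ht₂ : t ≤ μ (Function.update f i₂ b))
    (g : ι → α) : 0 ≤ μ g + exchange f i₁ a i₂ b t g := by
  have hne : Function.update f i₁ a ≠ Function.update f i₂ b := fun he => ha <| by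
    simpa [Function.update_of_ne h] using congrFun he i₁
  have hlow : -(if g = Function.update f i₁ a then t else 0)
      - (if g = Function.update f i₂ b then t else 0) ≤ exchange f i₁ a i₂ b t g := by
    simp only [exchange, Pi.add_apply, Pi.sub_apply, Pi.single_apply]
    split_ifs <;> linarith
  rcases eq_or_ne g (Function.update f i₁ a) with rfl | h₁
  · simp only [↓reduceIte, hne, sub_zero] at hlow
    linarith
  rcases eq_or_ne g (Function.update f i₂ b) with rfl | h₂
  · simp only [hne.symm, ↓reduceIte, neg_zero, zero_sub] at hlow
    linarith
  simp only [h₁, h₂, ↓reduceIte, neg_zero, sub_self] at hlow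
  linarith [hμ g]

variable [Fintype α]

lemma sum_exchange (f : ι → α) (i₁ : ι) (a : α) (i₂ : ι) (b : α) (t : ℝ) :
    ∑ g, exchange f i₁ a i₂ b t g = 0 := by
  simp [exchange, sum_add_distrib, sum_sub_distrib]

lemma sum_ite_exchange {i₁ i₂ : ι} (h : i₁ ≠ i₂) (f : ι → α) (a b : α) (t : ℝ) (i : ι) (j : α) :
    ∑ g, (if g i = j then exchange f i₁ a i₂ b t g else 0) = 0 := by
  rw [← sum_filter]
  simp only [exchange, Pi.add_apply, Pi.sub_apply, sum_add_distrib, sum_sub_distrib,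
    sum_pi_single', mem_filter, mem_univ, true_and]
  rcases eq_or_ne i i₁ with rfl | hi
  · simp [h]
  · simp [Function.update_apply, hi]

end Exchange

section Coupling

variable {S : Type*} [Fintype S] [DecidableEq S] {P : Matrix S S ℝ} {μ : (S → S) → ℝ}

lemma IsCoupling.add {c : (S → S) → ℝ} (hμ : IsCoupling μ P)
    (hc : ∀ i j, ∑ f, (if f i = j then c f else 0) = 0) (hsum : ∑ f, c f = 0)
    (hnn : ∀ f, 0 ≤ μ f + c f) : IsCoupling (μ + c) P := by
  refine ⟨hnn, by simp [sum_add_distrib, hμ.2.1, hsum], fun i j => ?_⟩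
  simp only [Pi.add_apply, ite_add_zero, sum_add_distrib, hμ.2.2, hc, add_zero]

variable (P) in
lemma isCoupling_prod (hnn : ∀ i j, 0 ≤ P i j) (hrow : ∀ i, ∑ j, P i j = 1) :
    IsCoupling (fun f => ∏ i, P i (f i)) P := by
  refine ⟨fun f => prod_nonneg fun i _ => hnn i (f i), ?_, fun i j => ?_⟩
  · calc ∑ f : S → S, ∏ i, P i (f i) = ∏ i, ∑ j, P i j := (Fintype.prod_sum fun i j => P i j).symm
      _ = 1 := by simp [hrow]
  · let Q : S → S → ℝ := fun k l => if k = i ∧ l ≠ j then 0 else P k l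
    have hQ : ∀ f : S → S, (if f i = j then ∏ k, P k (f k) else 0) = ∏ k, Q k (f k) := by
      intro f
      by_cases hf : f i = j
      · rw [if_pos hf]
        exact prod_congr rfl fun k _ => by rcases eq_or_ne k i with rfl | hk <;> simp [Q, *]
      · rw [if_neg hf]
        exact (prod_eq_zero (mem_univ i) (by simp [Q, hf])).symm
    rw [sum_congr rfl fun f _ => hQ f, ← Fintype.prod_sum, Fintype.prod_eq_single i]
    · simp [Q]
    · intro k hk
      simp [Q, hk, hrow]

lemma IsCoupling.apply_eq_zero (hμ : IsCoupling μ P) {f : S → S} {i : S} (h : P i (f i) = 0) :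
    μ f = 0 := by
  have hle := single_le_sum (f := fun g : S → S => if g i = f i then μ g else 0)
    (fun g _ => by split_ifs <;> simp [hμ.1 g]) (mem_univ f)
  simp only [if_true, hμ.2.2, h] at hle
  exact hle.antisymm (hμ.1 f)

lemma IsCoupling.apply_eq_of_deterministic_off (hμ : IsCoupling μ P) {i₀ : S} {g : S → S}
    (hg : ∀ i ≠ i₀, ∀ k ≠ g i, P i k = 0) (f : S → S) :
    μ f = if ∀ i ≠ i₀, f i = g i then P i₀ (f i₀) else 0 := by
  have hzero : ∀ f' : S → S, (∃ i ≠ i₀, f' i ≠ g i) → μ f' = 0 := by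
    rintro f' ⟨i, hi, hf'⟩
    exact hμ.apply_eq_zero (hg i hi _ hf')
  split_ifs with hf
  · rw [← hμ.2.2, Fintype.sum_eq_single f (fun f' hf' => ?_), if_pos rfl]
    split_ifs with hf'i₀
    · refine hzero f' (by_contra fun hall => hf' (funext fun i => ?_))
      push Not at hall
      rcases eq_or_ne i i₀ with rfl | hi
      · exact hf'i₀
      · rw [hall i hi, hf i hi]
    · rfl
  · push Not at hf
    exact hzero f hf

lemma IsCoupling.eq_of_deterministic_off {ν : (S → S) → ℝ} (hμ : IsCoupling μ P)
    (hν : IsCoupling ν P) (i₀ : S) (hdet : ∀ i ≠ i₀, ∃ k, ∀ l ≠ k, P i l = 0) : μ = ν := by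
  have hdet' : ∀ i, ∃ k, i ≠ i₀ → ∀ l ≠ k, P i l = 0 := fun i =>
    if hi : i = i₀ then ⟨i₀, fun h => (h hi).elim⟩ else (hdet i hi).imp fun _ hk _ => hk
  choose g hg using hdet'
  funext f
  rw [hμ.apply_eq_of_deterministic_off hg f, hν.apply_eq_of_deterministic_off hg f]

lemma exists_isCoupling_ne (hnn : ∀ i j, 0 ≤ P i j) (hrow : ∀ i, ∑ j, P i j = 1) {i₁ i₂ : S}
    (h : i₁ ≠ i₂) (h₁ : ∃ j, P i₁ j ∈ Set.Ioo 0 1) (h₂ : ∃ j, P i₂ j ∈ Set.Ioo 0 1) :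
    ∃ μ ν : (S → S) → ℝ, IsCoupling μ P ∧ IsCoupling ν P ∧ μ ≠ ν := by
  choose f hf using fun i => exists_pos_of_sum_eq_one (hrow i)
  obtain ⟨a, ha, hPa⟩ := (exists_mem_Ioo_iff_forall_exists_ne_pos (hnn i₁) (hrow i₁)).1 h₁ (f i₁)
  obtain ⟨b, hb, hPb⟩ := (exists_mem_Ioo_iff_forall_exists_ne_pos (hnn i₂) (hrow i₂)).1 h₂ (f i₂)
  set μ : (S → S) → ℝ := fun g => ∏ i, P i (g i)
  have hμ : IsCoupling μ P := isCoupling_prod P hnn hrow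
  have hμ_update : ∀ i₀ c, 0 < P i₀ c → 0 < μ (Function.update f i₀ c) := fun i₀ c hc =>
    prod_pos fun i _ => by
      rcases eq_or_ne i i₀ with rfl | hi
      · simpa using hc
      · simpa [hi] using hf i
  set t := min (μ (Function.update f i₁ a)) (μ (Function.update f i₂ b))
  have ht : 0 < t := lt_min (hμ_update i₁ a hPa) (hμ_update i₂ b hPb)
  refine ⟨μ, μ + exchange f i₁ a i₂ b t, hμ,
    hμ.add (sum_ite_exchange h f a b t) (sum_exchange f i₁ a i₂ b t)
      (add_exchange_nonneg hμ.1 h ha ht.le (min_le_left _ _) (min_le_right _ _)), fun heq => ?_⟩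
  have hf := congrFun heq f
  simp only [Pi.add_apply, exchange_apply_self ha hb, left_eq_add] at hf
  exact ht.ne' hf

end Coupling

theorem two_couplings_iff_two_rows_general {S : Type*} [Fintype S] [DecidableEq S] [Nonempty S]
    (P : Matrix S S ℝ)
    (hnn : ∀ i j, 0 ≤ P i j) (hrow : ∀ i, ∑ j, P i j = 1) :
    (∃ μ ν : (S → S) → ℝ, IsCoupling μ P ∧ IsCoupling ν P ∧ μ ≠ ν) ↔
      ∃ i₁ i₂ : S, i₁ ≠ i₂ ∧ (∃ j, P i₁ j ∈ Set.Ioo (0 : ℝ) 1) ∧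
        (∃ j, P i₂ j ∈ Set.Ioo (0 : ℝ) 1) := by
  constructor
  · rintro ⟨μ, ν, hμ, hν, hne⟩
    by_contra! h
    obtain ⟨i₀, hi₀⟩ : ∃ i₀, ∀ i ≠ i₀, ¬∃ j, P i j ∈ Set.Ioo 0 1 := by
      by_cases hex : ∃ i₀ j, P i₀ j ∈ Set.Ioo 0 1
      · obtain ⟨i₀, j₀, hj₀⟩ := hex
        exact ⟨i₀, fun i hi ⟨j, hj⟩ => h i₀ i (Ne.symm hi) ⟨j₀, hj₀⟩ j hj⟩
      · exact ⟨Classical.arbitrary S, fun i _ hi => hex ⟨i, hi⟩⟩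
    refine hne (hμ.eq_of_deterministic_off hν i₀ fun i hi => ?_)
    have hpoint := mt (exists_mem_Ioo_iff_forall_exists_ne_pos (hnn i) (hrow i)).2 (hi₀ i hi)
    push Not at hpoint
    obtain ⟨k, hk⟩ := hpoint
    exact ⟨k, fun l hl => (hk l hl).antisymm (hnn i l)⟩
  · rintro ⟨i₁, i₂, h, h₁, h₂⟩
    exact exists_isCoupling_ne hnn hrow h h₁ h₂

/-- `|L_P| ≥ 2` iff `P` has at least two rows each of which contains
an entry in the open interval `(0,1)`. -/
theorem two_couplings_iff_two_rows {S : Type*} [Fintype S] [DecidableEq S] [Nonempty S]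
    (P : Matrix S S ℝ)
    (hnn : ∀ i j, 0 ≤ P i j) (hrow : ∀ i, ∑ j, P i j = 1)
    (hirr : ∀ i j, ∃ n : ℕ, 0 < n ∧ 0 < (P ^ n) i j) :
    (∃ μ ν : (S → S) → ℝ, IsCoupling μ P ∧ IsCoupling ν P ∧ μ ≠ ν) ↔
      ∃ i₁ i₂ : S, i₁ ≠ i₂ ∧ (∃ j, P i₁ j ∈ Set.Ioo (0 : ℝ) 1) ∧
        (∃ j, P i₂ j ∈ Set.Ioo (0 : ℝ) 1) :=
  two_couplings_iff_two_rows_general P hnn hrow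
end

section
/- If a stochastic matrix P on a finite set S is such that every row of P has at most one row containing an entry strictly between 0 and 1 (i.e., at most one row is not a 0-1 row), and P is irreducible, then there is exactly one probability measure on F_S consistent with P, namely the independence (product) coupling. -/
open Finset

/-- if an irreducible stochastic matrix `P` has at most one row containing
an entry strictly between 0 and 1, then the only probability measure on `F_S`
consistent with `P` is the independence (product) coupling. -/
theorem unique_coupling_of_at_most_one_nontrivial_row
    {S : Type*} [Fintype S] [DecidableEq S] [Nonempty S]
    (P : Matrix S S ℝ)
    (hnn : ∀ i j, 0 ≤ P i j) (hrow : ∀ i, ∑ j, P i j = 1)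
    (hirr : ∀ i j, ∃ n : ℕ, 0 < n ∧ 0 < (P ^ n) i j)
    (hone : ∀ i₁ i₂ : S, (∃ j, P i₁ j ∈ Set.Ioo (0 : ℝ) 1) →
      (∃ j, P i₂ j ∈ Set.Ioo (0 : ℝ) 1) → i₁ = i₂) :
    ∀ μ : (S → S) → ℝ, IsCoupling μ P → μ = fun f => ∏ i, P i (f i) := by
  intro μ hμ
  obtain ⟨hpos, hsum, hcons⟩ := hμ
  have hle1 : ∀ i j, P i j ≤ 1 := by
    intro i j
    calc P i j ≤ ∑ k, P i k :=
          Finset.single_le_sum (fun k _ => hnn i k) (mem_univ j)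
      _ = 1 := hrow i
  have hzero : ∀ i k j, P i k = 1 → j ≠ k → P i j = 0 := by
    intro i k j hk hjk
    have h1 : ∑ l ∈ univ.erase k, P i l = 0 := by
      have h := hrow i
      rw [← Finset.add_sum_erase _ _ (mem_univ k), hk] at h
      linarith
    exact (Finset.sum_eq_zero_iff_of_nonneg (fun l _ => hnn i l)).mp h1 j
      (Finset.mem_erase.mpr ⟨hjk, mem_univ j⟩)
  have hsupp : ∀ i j, P i j = 0 → ∀ f, f i = j → μ f = 0 := by
    intro i j hPij f hf
    have h0 : ∑ h : S → S, (if h i = j then μ h else 0) = 0 := by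
      rw [hcons]; exact hPij
    have := (Finset.sum_eq_zero_iff_of_nonneg
      (fun h _ => by by_cases hc : h i = j <;> simp [hc, hpos h])).mp h0 f (mem_univ f)
    simpa [hf] using this
  funext f
  show μ f = ∏ i, P i (f i)
  by_cases hf0 : ∃ i, P i (f i) = 0
  · obtain ⟨i, hi⟩ := hf0
    rw [hsupp i (f i) hi f rfl]
    exact (Finset.prod_eq_zero (mem_univ i) hi).symm
  push_neg at hf0
  have hDet1 : ∀ i, (¬ ∃ j, P i j ∈ Set.Ioo (0 : ℝ) 1) → P i (f i) = 1 := by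
    intro i hi
    push_neg at hi
    have hnot := hi (f i)
    rcases eq_or_lt_of_le (hnn i (f i)) with h | h
    · exact absurd h.symm (hf0 i)
    rcases eq_or_lt_of_le (hle1 i (f i)) with h' | h'
    · exact h'
    · exact absurd ⟨h, h'⟩ hnot
  by_cases hD : ∃ i₀, ∃ j, P i₀ j ∈ Set.Ioo (0 : ℝ) 1
  · obtain ⟨i₀, hi₀⟩ := hD
    have huniq : ∀ i, i ≠ i₀ → P i (f i) = 1 := by
      intro i hi
      exact hDet1 i (fun hcon => hi (hone i i₀ hcon hi₀))
    have hprod : ∏ i, P i (f i) = P i₀ (f i₀) :=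
      Finset.prod_eq_single i₀ (fun b _ hb => huniq b hb)
        (fun h => absurd (mem_univ i₀) h)
    have hsum' : ∑ h : S → S, (if h i₀ = f i₀ then μ h else 0) = μ f := by
      rw [Finset.sum_eq_single f]
      · simp
      · intro h _ hhf
        by_cases hc : h i₀ = f i₀
        · rw [if_pos hc]
          obtain ⟨i, hi⟩ := Function.ne_iff.mp hhf
          have hii₀ : i ≠ i₀ := fun e => hi (by rw [e]; exact hc)
          exact hsupp i (h i) (hzero i (f i) (h i) (huniq i hii₀) hi) h rfl
        · rw [if_neg hc]
      · intro h; exact absurd (mem_univ f) h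
    rw [hprod, ← hcons i₀ (f i₀)]
    exact hsum'.symm
  · have h1 : ∀ i, P i (f i) = 1 := fun i =>
      hDet1 i (fun hc => hD ⟨i, hc⟩)
    have hμf : ∑ h : S → S, μ h = μ f := by
      apply Finset.sum_eq_single f
      · intro h _ hhf
        obtain ⟨i, hi⟩ := Function.ne_iff.mp hhf
        exact hsupp i (h i) (hzero i (f i) (h i) (h1 i) hi) h rfl
      · intro h; exact absurd (mem_univ f) h
    rw [← hμf, hsum, Finset.prod_eq_one (fun i _ => h1 i)]
end

section
/- Let P be an irreducible stochastic matrix on a finite set S with invariant distribution π, and suppose there exists a state s with π_s > 1/m for some positive integer m. Then for every coupling μ ∈ L_P, the number of coalescence classes k(μ) is strictly less than m. -/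
open Finset MeasureTheory

/-- `comps f t = f_t ∘ ⋯ ∘ f_1` (indexed from `0`). -/
def comps {S : Type*} (f : ℕ → S → S) : ℕ → S → S
  | 0 => id
  | t + 1 => f t ∘ comps f t

/-!
By the ergodic theorem for `P`, proved through the fundamental matrix `(1 - P + Π)⁻¹` where every
row of `Π` is `π`, the time-averaged expected number of `m` chains sitting at `s` tends to
`m π_s > 1`, so at some time `t` it exceeds `1`. While the chains are pairwise distinct at most one
of them sits at `s`, so with positive probability two of them have met by time `t`. There are
finitely many starting configurations, hence a uniform time `T` and a uniform bound `c < 1` on the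
probability of no meeting by `T`; by the Markov property the probability of no meeting by time `kT`
is at most `c ^ k`, which tends to `0`.
-/

open Function Filter Topology Matrix

section InvariantDistribution

variable {S : Type*} [Fintype S]

theorem replicateRow_mul (v : S → ℝ) (M : Matrix S S ℝ) :
    replicateRow S v * M = replicateRow S (v ᵥ* M) := by
  ext i j
  simp [mul_apply, vecMul, dotProduct]

theorem vecMul_replicateRow (u v : S → ℝ) : u ᵥ* replicateRow S v = (∑ i, u i) • v := by
  ext j
  simp [vecMul, dotProduct, sum_mul]

variable [DecidableEq S] {P : Matrix S S ℝ} {π : S → ℝ}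

theorem vecMul_pow_of_vecMul_eq {R : Type*} [Semiring R] {M : Matrix S S R} {v : S → R}
    (hv : v ᵥ* M = v) (n : ℕ) : v ᵥ* M ^ n = v := by
  induction n with
  | zero => rw [pow_zero, vecMul_one]
  | succ n ih => rw [pow_succ, ← vecMul_vecMul, ih, hv]

theorem eq_zero_of_vecMul_eq_of_nonneg (hP : ∀ i j, 0 ≤ P i j)
    (hirr : ∀ i j, ∃ n : ℕ, 0 < (P ^ n) i j) {w : S → ℝ} (hw : w ᵥ* P = w) (hw0 : 0 ≤ w)
    {k : S} (hk : w k = 0) : w = 0 := by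
  funext j
  obtain ⟨n, hn⟩ := hirr j k
  have : w j * (P ^ n) j k ≤ 0 :=
    calc w j * (P ^ n) j k ≤ (w ᵥ* P ^ n) k :=
          single_le_sum (f := fun i => w i * (P ^ n) i k)
            (fun i _ => mul_nonneg (hw0 i) (pow_apply_nonneg hP n i k)) (mem_univ j)
      _ = 0 := by rw [vecMul_pow_of_vecMul_eq hw, hk]
  exact le_antisymm (nonpos_of_mul_nonpos_left this hn) (hw0 j)

theorem exists_eq_smul_of_vecMul_eq (hP : ∀ i j, 0 ≤ P i j)
    (hirr : ∀ i j, ∃ n : ℕ, 0 < (P ^ n) i j) (hπpos : ∀ i, 0 < π i) (hπ : π ᵥ* P = π)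
    {v : S → ℝ} (hv : v ᵥ* P = v) : ∃ c : ℝ, v = c • π := by
  cases isEmpty_or_nonempty S
  · exact ⟨0, Subsingleton.elim _ _⟩
  obtain ⟨k, -, hk⟩ := exists_min_image univ (fun i => v i / π i) univ_nonempty
  refine ⟨v k / π k, sub_eq_zero.1 <| eq_zero_of_vecMul_eq_of_nonneg hP hirr ?_ ?_ (k := k) ?_⟩
  · rw [sub_vecMul, smul_vecMul, hv, hπ]
  · intro i
    simpa using (le_div_iff₀ (hπpos i)).1 (hk i (mem_univ i))
  · simp [div_mul_cancel₀ _ (hπpos k).ne']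

theorem mul_replicateRow_of_mem_rowStochastic {M : Matrix S S ℝ} (hM : M ∈ rowStochastic ℝ S)
    (v : S → ℝ) : M * replicateRow S v = replicateRow S v := by
  ext i j
  simp [mul_apply, ← sum_mul, sum_row_of_mem_rowStochastic hM]

theorem sum_vecMul_of_mem_rowStochastic (hP : P ∈ rowStochastic ℝ S) (v : S → ℝ) :
    ∑ j, (v ᵥ* P) j = ∑ j, v j := by
  rw [← dotProduct_one, ← dotProduct_mulVec, one_vecMul_of_mem_rowStochastic hP, dotProduct_one]

theorem det_one_sub_add_replicateRow_ne_zero (hP : P ∈ rowStochastic ℝ S)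
    (hirr : ∀ i j, ∃ n : ℕ, 0 < (P ^ n) i j) (hπpos : ∀ i, 0 < π i) (hπsum : ∑ i, π i = 1)
    (hπ : π ᵥ* P = π) : (1 - P + replicateRow S π).det ≠ 0 := by
  intro hdet
  obtain ⟨v, hv0, hv⟩ := exists_vecMul_eq_zero_iff.2 hdet
  rw [vecMul_add, vecMul_sub, vecMul_one, vecMul_replicateRow] at hv
  have hsum : ∑ i, v i = 0 := by
    simpa [sum_add_distrib, sum_sub_distrib, sum_vecMul_of_mem_rowStochastic hP, ← mul_sum,
      hπsum] using congrArg (fun u => ∑ i, u i) hv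
  rw [hsum, zero_smul, add_zero, sub_eq_zero] at hv
  obtain ⟨c, rfl⟩ := exists_eq_smul_of_vecMul_eq (fun i j => hP.1 i j) hirr hπpos hπ hv.symm
  simp only [Pi.smul_apply, smul_eq_mul, ← mul_sum, hπsum, mul_one] at hsum
  exact hv0 (by simp [hsum])

theorem sum_range_pow_eq (hP : P ∈ rowStochastic ℝ S) (hπsum : ∑ i, π i = 1) (hπ : π ᵥ* P = π)
    (hB : IsUnit (1 - P + replicateRow S π).det) (T : ℕ) :
    ∑ t ∈ range T, P ^ t = (1 - P ^ T) * (1 - P + replicateRow S π)⁻¹ + T • replicateRow S π := by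
  set B := 1 - P + replicateRow S π
  have hMB : (∑ t ∈ range T, P ^ t) * B = (1 - P ^ T) + T • replicateRow S π := by
    rw [mul_add, geom_sum_mul_neg, sum_mul]
    simp_rw [mul_replicateRow_of_mem_rowStochastic (pow_mem hP _)]
    rw [sum_const, card_range]
  have hRB : replicateRow S π * B = replicateRow S π := by
    rw [mul_add, replicateRow_mul, replicateRow_mul, vecMul_replicateRow, vecMul_sub, vecMul_one,
      hπ, hπsum, one_smul, sub_self, ← replicateRow_add, zero_add]
  calc ∑ t ∈ range T, P ^ t = (∑ t ∈ range T, P ^ t) * B * B⁻¹ :=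
        (mul_nonsing_inv_cancel_right B _ hB).symm
    _ = (1 - P ^ T) * B⁻¹ + T • (replicateRow S π * B * B⁻¹) := by
        rw [hMB, add_mul, smul_mul_assoc, hRB]
    _ = _ := by rw [mul_nonsing_inv_cancel_right B _ hB]

theorem tendsto_cesaro_pow_apply (hP : P ∈ rowStochastic ℝ S)
    (hirr : ∀ i j, ∃ n : ℕ, 0 < (P ^ n) i j) (hπpos : ∀ i, 0 < π i) (hπsum : ∑ i, π i = 1)
    (hπ : π ᵥ* P = π) (i j : S) :
    Tendsto (fun T : ℕ => (T : ℝ)⁻¹ * ∑ t ∈ range T, (P ^ t) i j) atTop (𝓝 (π j)) := by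
  set Z := (1 - P + replicateRow S π)⁻¹
  have hB := isUnit_iff_ne_zero.2 (det_one_sub_add_replicateRow_ne_zero hP hirr hπpos hπsum hπ)
  have hsum : ∀ T : ℕ, ∑ t ∈ range T, (P ^ t) i j = ((1 - P ^ T) * Z) i j + T * π j := by
    intro T
    rw [← Matrix.sum_apply, sum_range_pow_eq hP hπsum hπ hB T, Matrix.add_apply, Matrix.smul_apply,
      replicateRow_apply, nsmul_eq_mul]
  have hbound : ∀ T : ℕ, |((1 - P ^ T) * Z) i j| ≤ ∑ k, |Z k j| := by
    intro T
    refine (abs_sum_le_sum_abs _ _).trans (sum_le_sum fun k _ => ?_)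
    rw [abs_mul]
    refine mul_le_of_le_one_left (abs_nonneg _) ?_
    have h1 : (0 : ℝ) ≤ (1 : Matrix S S ℝ) i k ∧ (1 : Matrix S S ℝ) i k ≤ 1 := by
      rw [one_apply]; split_ifs <;> norm_num
    simpa using abs_sub_le_of_le_of_le h1.1 h1.2 (nonneg_of_mem_rowStochastic (pow_mem hP T))
      (le_one_of_mem_rowStochastic (pow_mem hP T))
  have hvanish : Tendsto (fun T : ℕ => (T : ℝ)⁻¹ * ((1 - P ^ T) * Z) i j) atTop (𝓝 0) := by
    refine squeeze_zero_norm (fun T => ?_)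
      (by simpa using tendsto_inv_atTop_nhds_zero_nat.mul_const (∑ k, |Z k j|))
    rw [norm_mul, norm_inv, Real.norm_natCast, Real.norm_eq_abs]
    exact mul_le_mul_of_nonneg_left (hbound T) (by positivity)
  have hlim := hvanish.add_const (π j)
  rw [zero_add] at hlim
  refine hlim.congr' ?_
  filter_upwards [eventually_ne_atTop 0] with T hT
  rw [hsum, mul_add, inv_mul_cancel_left₀ (Nat.cast_ne_zero.2 hT)]

theorem exists_lt_sum_pow_apply (hP : P ∈ rowStochastic ℝ S)
    (hirr : ∀ i j, ∃ n : ℕ, 0 < (P ^ n) i j) (hπpos : ∀ i, 0 < π i) (hπsum : ∑ i, π i = 1)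
    (hπ : π ᵥ* P = π) {ι : Type*} [Fintype ι] {s : S} (hs : 1 < Fintype.card ι * π s)
    (x : ι → S) : ∃ t, 1 < ∑ a, (P ^ t) (x a) s := by
  have hlim : Tendsto (fun T : ℕ => ∑ a, (T : ℝ)⁻¹ * ∑ t ∈ range T, (P ^ t) (x a) s) atTop
      (𝓝 (Fintype.card ι * π s)) := by
    simpa using tendsto_finsetSum univ fun a _ =>
      tendsto_cesaro_pow_apply hP hirr hπpos hπsum hπ (x a) s
  obtain ⟨T, hT⟩ := (hlim.eventually_const_lt hs).exists
  have hTpos : (0 : ℝ) < T := Nat.cast_pos.2 <| Nat.pos_of_ne_zero <| by rintro rfl; norm_num at hT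
  rw [← mul_sum, sum_comm, lt_inv_mul_iff₀ hTpos, mul_one] at hT
  obtain ⟨t, -, ht⟩ := exists_lt_of_sum_lt (by simpa using hT :
    ∑ _t ∈ range T, (1 : ℝ) < ∑ t ∈ range T, ∑ a, (P ^ t) (x a) s)
  exact ⟨t, ht⟩

end InvariantDistribution

section Paths

variable {S ι : Type*}

theorem comps_succ' (g : ℕ → S → S) (t : ℕ) :
    comps g (t + 1) = comps (fun u => g (u + 1)) t ∘ g 0 := by
  induction t with
  | zero => rfl
  | succ t ih => rw [comps, ih]; rfl

theorem comps_congr {g g' : ℕ → S → S} {t : ℕ} (h : ∀ u < t, g u = g' u) :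
    comps g t = comps g' t := by
  induction t with
  | zero => rfl
  | succ t ih => rw [comps, comps, ih fun u hu => h u (by omega), h t (by omega)]

def StaysInjective (g : ℕ → S → S) (n : ℕ) (x : ι → S) : Prop :=
  ∀ t ≤ n, Injective (comps g t ∘ x)

instance [Fintype ι] [DecidableEq ι] [DecidableEq S] (g : ℕ → S → S) (n : ℕ) (x : ι → S) :
    Decidable (StaysInjective g n x) :=
  inferInstanceAs (Decidable (∀ t ≤ n, _))

theorem staysInjective_zero {g : ℕ → S → S} {x : ι → S} : StaysInjective g 0 x ↔ Injective x := by
  simp [StaysInjective, comps]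

theorem staysInjective_succ {g : ℕ → S → S} {n : ℕ} {x : ι → S} :
    StaysInjective g (n + 1) x ↔
      Injective x ∧ StaysInjective (fun u => g (u + 1)) n (g 0 ∘ x) := by
  constructor
  · intro h
    refine ⟨h 0 (Nat.zero_le _), fun t ht => ?_⟩
    have := h (t + 1) (by omega)
    rwa [comps_succ'] at this
  · rintro ⟨h0, h⟩ (_ | t) ht
    · exact h0
    · rw [comps_succ']
      exact h t (by omega)

theorem StaysInjective.congr {g g' : ℕ → S → S} {n : ℕ} {x : ι → S}
    (h : ∀ u < n, g u = g' u) (hg : StaysInjective g n x) : StaysInjective g' n x := by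
  intro t ht
  rw [← comps_congr fun u hu => h u (by omega)]
  exact hg t ht

def padId {n : ℕ} (v : Fin n → S → S) (t : ℕ) : S → S :=
  if h : t < n then v ⟨t, h⟩ else id

theorem padId_of_lt {n : ℕ} (v : Fin n → S → S) {t : ℕ} (ht : t < n) : padId v t = v ⟨t, ht⟩ :=
  dif_pos ht

theorem padId_cons_zero {n : ℕ} (f : S → S) (w : Fin n → S → S) :
    padId (Fin.cons f w : Fin (n + 1) → S → S) 0 = f := by
  simp [padId]

theorem padId_cons_succ {n : ℕ} (f : S → S) (w : Fin n → S → S) (t : ℕ) :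
    padId (Fin.cons f w : Fin (n + 1) → S → S) (t + 1) = padId w t := by
  unfold padId
  by_cases h : t < n
  · rw [dif_pos (by omega), dif_pos h]
    exact Fin.cons_succ (α := fun _ => S → S) f w ⟨t, h⟩
  · rw [dif_neg (by omega), dif_neg h]

end Paths

section NoCoalescence

variable {S ι : Type*} [Fintype S] [DecidableEq S] [Fintype ι] [DecidableEq ι]
  {μ : (S → S) → ℝ}

def noCoalescenceProb (μ : (S → S) → ℝ) (n : ℕ) (x : ι → S) : ℝ :=
  ∑ v : Fin n → S → S, if StaysInjective (padId v) n x then ∏ t, μ (v t) else 0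

theorem noCoalescenceProb_zero (x : ι → S) :
    noCoalescenceProb μ 0 x = if Injective x then 1 else 0 := by
  simp [noCoalescenceProb, staysInjective_zero]

theorem noCoalescenceProb_succ (n : ℕ) (x : ι → S) :
    noCoalescenceProb μ (n + 1) x =
      if Injective x then ∑ f, μ f * noCoalescenceProb μ n (f ∘ x) else 0 := by
  have hcons : ∀ f (w : Fin n → S → S),
      StaysInjective (padId (Fin.consEquiv (fun _ => S → S) (f, w))) (n + 1) x ↔
        Injective x ∧ StaysInjective (padId w) n (f ∘ x) := by
    intro f w
    change StaysInjective (padId (Fin.cons f w)) _ _ ↔ _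
    rw [staysInjective_succ, padId_cons_zero]
    simp only [padId_cons_succ]
  unfold noCoalescenceProb
  rw [← (Fin.consEquiv fun _ => S → S).sum_comp, Fintype.sum_prod_type]
  simp only [hcons, Fin.prod_univ_succ, Fin.consEquiv_apply, Fin.cons_zero, Fin.cons_succ]
  split_ifs with hx
  · simp [hx, mul_sum]
  · simp [hx]

theorem noCoalescenceProb_of_not_injective {x : ι → S} (hx : ¬ Injective x) (n : ℕ) :
    noCoalescenceProb μ n x = 0 := by
  cases n <;> simp [noCoalescenceProb_zero, noCoalescenceProb_succ, hx]

theorem noCoalescenceProb_nonneg (hμ0 : ∀ f, 0 ≤ μ f) (n : ℕ) (x : ι → S) :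
    0 ≤ noCoalescenceProb μ n x :=
  sum_nonneg fun _ _ => by split_ifs <;> first | exact prod_nonneg fun _ _ => hμ0 _ | rfl

theorem noCoalescenceProb_le_one (hμ0 : ∀ f, 0 ≤ μ f) (hμ1 : ∑ f, μ f = 1) (n : ℕ) (x : ι → S) :
    noCoalescenceProb μ n x ≤ 1 :=
  calc noCoalescenceProb μ n x ≤ ∑ v : Fin n → S → S, ∏ t, μ (v t) :=
        sum_le_sum fun _ _ => by split_ifs <;> first | rfl | exact prod_nonneg fun _ _ => hμ0 _
    _ = 1 := by rw [← Fintype.prod_sum, hμ1, prod_const_one]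

theorem noCoalescenceProb_add_le (hμ0 : ∀ f, 0 ≤ μ f) {T : ℕ} {c : ℝ}
    (hc : ∀ y : ι → S, noCoalescenceProb μ T y ≤ c) (n : ℕ) (x : ι → S) :
    noCoalescenceProb μ (n + T) x ≤ c * noCoalescenceProb μ n x := by
  induction n generalizing x with
  | zero =>
    rw [zero_add, noCoalescenceProb_zero]
    split_ifs with hx
    · simpa using hc x
    · simp [noCoalescenceProb_of_not_injective hx]
  | succ n ih =>
    rw [Nat.add_right_comm, noCoalescenceProb_succ, noCoalescenceProb_succ]
    split_ifs
    · rw [mul_sum]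
      exact sum_le_sum fun f _ => by
        rw [mul_left_comm]
        exact mul_le_mul_of_nonneg_left (ih _) (hμ0 f)
    · simp

theorem noCoalescenceProb_antitone (hμ0 : ∀ f, 0 ≤ μ f) (hμ1 : ∑ f, μ f = 1) (x : ι → S) :
    Antitone fun n => noCoalescenceProb μ n x :=
  antitone_nat_of_succ_le fun n => by
    simpa using noCoalescenceProb_add_le hμ0 (noCoalescenceProb_le_one hμ0 hμ1 1) n x

theorem noCoalescenceProb_mul_le_pow (hμ0 : ∀ f, 0 ≤ μ f) (hμ1 : ∑ f, μ f = 1) {T : ℕ} {c : ℝ}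
    (hc0 : 0 ≤ c) (hc : ∀ y : ι → S, noCoalescenceProb μ T y ≤ c) (k : ℕ) (x : ι → S) :
    noCoalescenceProb μ (k * T) x ≤ c ^ k := by
  induction k with
  | zero => simpa using noCoalescenceProb_le_one hμ0 hμ1 0 x
  | succ k ih =>
    rw [Nat.succ_mul, pow_succ']
    exact (noCoalescenceProb_add_le hμ0 hc _ x).trans (mul_le_mul_of_nonneg_left ih hc0)

theorem tendsto_noCoalescenceProb_nhds_zero (hμ0 : ∀ f, 0 ≤ μ f) (hμ1 : ∑ f, μ f = 1)
    (h : ∀ x : ι → S, ∃ t, noCoalescenceProb μ t x < 1) (x : ι → S) :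
    Tendsto (fun n => noCoalescenceProb μ n x) atTop (𝓝 0) := by
  choose t ht using h
  set T := univ.sup t + 1
  obtain ⟨y, -, hy⟩ := exists_max_image univ (fun y => noCoalescenceProb μ T y) ⟨x, mem_univ x⟩
  have hc1 : noCoalescenceProb μ T y < 1 :=
    (noCoalescenceProb_antitone hμ0 hμ1 y ((le_sup (mem_univ y)).trans (Nat.le_succ _))).trans_lt
      (ht y)
  refine squeeze_zero (fun n => noCoalescenceProb_nonneg hμ0 n x) (fun n => ?_)
    ((tendsto_pow_atTop_nhds_zero_of_lt_one (noCoalescenceProb_nonneg hμ0 T y) hc1).comp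
      (Nat.tendsto_div_const_atTop (n := T) (Nat.succ_ne_zero _)))
  exact (noCoalescenceProb_antitone hμ0 hμ1 x (Nat.div_mul_le_self n T)).trans
    (noCoalescenceProb_mul_le_pow hμ0 hμ1 (noCoalescenceProb_nonneg hμ0 T y)
      (fun z => hy z (mem_univ z)) _ x)

end NoCoalescence

section Coupling

variable {S ι : Type*} [Fintype S] [DecidableEq S] [Fintype ι] [DecidableEq ι]
  {μ : (S → S) → ℝ} {P : Matrix S S ℝ}

theorem IsCoupling.mul_apply (hμ : IsCoupling μ P) (M : Matrix S S ℝ) (i j : S) :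
    (P * M) i j = ∑ f, μ f * M (f i) j := by
  simp_rw [Matrix.mul_apply, ← hμ.2.2, sum_mul, ite_mul, zero_mul]
  rw [sum_comm]
  simp

theorem IsCoupling.sum_pow_apply_le (hμ : IsCoupling μ P) (n : ℕ) (x : ι → S) (s : S) :
    ∑ a, (P ^ n) (x a) s ≤
      Fintype.card ι - (Fintype.card ι - 1) * noCoalescenceProb μ n x := by
  set N : ℝ := (Fintype.card ι : ℝ)
  induction n generalizing x with
  | zero =>
    simp only [pow_zero, Matrix.one_apply, noCoalescenceProb_zero, sum_boole]
    split_ifs with hx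
    · have : #{a | x a = s} ≤ 1 := card_le_one.2 fun a ha b hb => hx <| by
        simp only [mem_filter] at ha hb; rw [ha.2, hb.2]
      simp only [mul_one, sub_sub_cancel]
      exact_mod_cast this
    · simpa [N] using card_filter_le univ _
  | succ n ih =>
    have hstep : ∑ a, (P ^ (n + 1)) (x a) s ≤
        N - (N - 1) * ∑ f, μ f * noCoalescenceProb μ n (f ∘ x) :=
      calc ∑ a, (P ^ (n + 1)) (x a) s = ∑ f, μ f * ∑ a, (P ^ n) ((f ∘ x) a) s := by
            simp_rw [pow_succ', hμ.mul_apply, mul_sum]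
            exact sum_comm
        _ ≤ ∑ f, μ f * (N - (N - 1) * noCoalescenceProb μ n (f ∘ x)) :=
            sum_le_sum fun f _ => mul_le_mul_of_nonneg_left (ih _) (hμ.1 f)
        _ = N - (N - 1) * ∑ f, μ f * noCoalescenceProb μ n (f ∘ x) := by
            simp_rw [mul_sub, sum_sub_distrib, ← sum_mul, hμ.2.1, mul_left_comm _ (N - 1),
              ← mul_sum, one_mul]
    rw [noCoalescenceProb_succ]
    split_ifs with hx
    · exact hstep
    · obtain ⟨a, -⟩ := not_injective_iff.1 hx
      have hN : 1 ≤ N := Nat.one_le_cast.2 (Fintype.card_pos_iff.2 ⟨a⟩)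
      have := sum_nonneg fun f (_ : f ∈ univ) =>
        mul_nonneg (hμ.1 f) (noCoalescenceProb_nonneg hμ.1 n (f ∘ x))
      nlinarith

theorem IsCoupling.noCoalescenceProb_lt_one (hμ : IsCoupling μ P) {n : ℕ} {x : ι → S} {s : S}
    (h : 1 < ∑ a, (P ^ n) (x a) s) : noCoalescenceProb μ n x < 1 := by
  have := hμ.sum_pow_apply_le n x s
  have := noCoalescenceProb_le_one hμ.1 hμ.2.1 n x
  nlinarith

end Coupling

section Measure

variable {S ι Ω : Type*} [Fintype S] [DecidableEq S] [Fintype ι] [DecidableEq ι]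
  [MeasurableSpace Ω] {Pr : Measure Ω} {μ : (S → S) → ℝ} {F : ℕ → Ω → S → S}

theorem measure_staysInjective_le (hμ0 : ∀ f, 0 ≤ μ f)
    (hiid : ∀ (T : Finset ℕ) (g : ℕ → S → S),
      Pr {ω | ∀ t ∈ T, F t ω = g t} = ∏ t ∈ T, ENNReal.ofReal (μ (g t)))
    (n : ℕ) (x : ι → S) :
    Pr {ω | StaysInjective (fun t => F t ω) n x} ≤ ENNReal.ofReal (noCoalescenceProb μ n x) := by
  have hcover : {ω | StaysInjective (fun t => F t ω) n x} ⊆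
      ⋃ v ∈ univ.filter fun v : Fin n → S → S => StaysInjective (padId v) n x,
        {ω | ∀ t ∈ range n, F t ω = padId v t} := by
    intro ω hω
    have hagree : ∀ t < n, F t ω = padId (fun u : Fin n => F u ω) t := fun t ht => by
      rw [padId_of_lt _ ht]
    simp only [Set.mem_iUnion, Set.mem_ofPred_eq, mem_filter, mem_univ, true_and, mem_range]
    exact ⟨fun u => F u ω, StaysInjective.congr hagree hω, hagree⟩
  have hcyl : ∀ v : Fin n → S → S,
      Pr {ω | ∀ t ∈ range n, F t ω = padId v t} = ENNReal.ofReal (∏ t, μ (v t)) := by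
    intro v
    rw [hiid, ← Fin.prod_univ_eq_prod_range, ENNReal.ofReal_prod_of_nonneg fun t _ => hμ0 _]
    simp only [padId_of_lt _ (Fin.is_lt _)]
  calc Pr {ω | StaysInjective (fun t => F t ω) n x}
      ≤ ∑ v ∈ univ.filter fun v : Fin n → S → S => StaysInjective (padId v) n x,
          Pr {ω | ∀ t ∈ range n, F t ω = padId v t} :=
        (measure_mono hcover).trans (measure_biUnion_finset_le _ _)
    _ = ENNReal.ofReal (noCoalescenceProb μ n x) := by
        simp_rw [hcyl]
        rw [← ENNReal.ofReal_sum_of_nonneg fun v _ => prod_nonneg fun t _ => hμ0 _,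
          noCoalescenceProb, sum_filter]

theorem measure_forall_staysInjective_eq_zero (hμ0 : ∀ f, 0 ≤ μ f)
    (hiid : ∀ (T : Finset ℕ) (g : ℕ → S → S),
      Pr {ω | ∀ t ∈ T, F t ω = g t} = ∏ t ∈ T, ENNReal.ofReal (μ (g t)))
    {x : ι → S} (hx : Tendsto (fun n => noCoalescenceProb μ n x) atTop (𝓝 0)) :
    Pr {ω | ∀ n, StaysInjective (fun t => F t ω) n x} = 0 := by
  refine le_antisymm (ge_of_tendsto' (by simpa using ENNReal.tendsto_ofReal hx) fun n => ?_)
    bot_le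
  exact (measure_mono (Set.ofPred_subset_ofPred.2 fun _ hω => hω n)).trans
    (measure_staysInjective_le hμ0 hiid n x)

end Measure

theorem coalescence_classes_lt_of_invariant_large_general
    {S : Type*} [Fintype S] [DecidableEq S]
    {Ω : Type*} [MeasurableSpace Ω] (Pr : Measure Ω)
    (P : Matrix S S ℝ)
    (hnn : ∀ i j, 0 ≤ P i j) (hrow : ∀ i, ∑ j, P i j = 1)
    (hirr : ∀ i j, ∃ n : ℕ, 0 < n ∧ 0 < (P ^ n) i j)
    (π : S → ℝ) (hπpos : ∀ i, 0 < π i) (hπsum : ∑ i, π i = 1)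
    (hπinv : ∀ j, ∑ i, π i * P i j = π j)
    (m : ℕ) (hm : 0 < m) (s : S) (hs : 1 / (m : ℝ) < π s)
    (μ : (S → S) → ℝ) (hμ : IsCoupling μ P)
    (F : ℕ → Ω → S → S)
    (hiid : ∀ (T : Finset ℕ) (g : ℕ → S → S),
      Pr {ω | ∀ t ∈ T, F t ω = g t} = ∏ t ∈ T, ENNReal.ofReal (μ (g t))) :
    ∀ᵐ ω ∂Pr, ∀ ι : Fin m → S, Function.Injective ι →
      ∃ a b : Fin m, a ≠ b ∧
        ∃ t : ℕ, comps (fun n => F n ω) t (ι a) = comps (fun n => F n ω) t (ι b) := by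
  have hP : P ∈ rowStochastic ℝ S := mem_rowStochastic_iff_sum.2 ⟨hnn, hrow⟩
  have hms : 1 < Fintype.card (Fin m) * π s := by
    rwa [Fintype.card_fin, mul_comm, ← div_lt_iff₀ (Nat.cast_pos.2 hm)]
  have hmeet : ∀ x : Fin m → S, ∃ t, noCoalescenceProb μ t x < 1 := fun x =>
    (exists_lt_sum_pow_apply hP (fun i j => (hirr i j).imp fun _ h => h.2) hπpos hπsum
      (funext hπinv) hms x).imp fun _ => hμ.noCoalescenceProb_lt_one
  refine ae_all_iff.2 fun ι => ?_
  filter_upwards [measure_eq_zero_iff_ae_notMem.1 (measure_forall_staysInjective_eq_zero hμ.1 hiid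
    (tendsto_noCoalescenceProb_nhds_zero hμ.1 hμ.2.1 hmeet ι))] with ω hω _
  obtain ⟨n, t, -, ht⟩ : ∃ n, ∃ t ≤ n, ¬ Injective (comps (fun n => F n ω) t ∘ ι) := by
    simpa [StaysInjective] using hω
  obtain ⟨a, b, hab, hne⟩ := not_injective_iff.1 ht
  exact ⟨a, b, hne, t, hab⟩

/-- if the invariant distribution `π` of the irreducible stochastic matrix `P`
satisfies `π s > 1/m` for some state `s`, then for every grand coupling `μ ∈ L_P` the number
of coalescence classes is almost surely `< m`: a.s., among any `m` distinct initial states,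
some two of the coupled trajectories coalesce. -/
theorem coalescence_classes_lt_of_invariant_large
    {S : Type*} [Fintype S] [DecidableEq S] [Nonempty S]
    {Ω : Type*} [MeasurableSpace Ω] (Pr : Measure Ω) [IsProbabilityMeasure Pr]
    (P : Matrix S S ℝ)
    (hnn : ∀ i j, 0 ≤ P i j) (hrow : ∀ i, ∑ j, P i j = 1)
    (hirr : ∀ i j, ∃ n : ℕ, 0 < n ∧ 0 < (P ^ n) i j)
    (π : S → ℝ) (hπpos : ∀ i, 0 < π i) (hπsum : ∑ i, π i = 1)
    (hπinv : ∀ j, ∑ i, π i * P i j = π j)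
    (m : ℕ) (hm : 0 < m) (s : S) (hs : 1 / (m : ℝ) < π s)
    (μ : (S → S) → ℝ) (hμ : IsCoupling μ P)
    (F : ℕ → Ω → S → S)
    (hiid : ∀ (T : Finset ℕ) (g : ℕ → S → S),
      Pr {ω | ∀ t ∈ T, F t ω = g t} = ∏ t ∈ T, ENNReal.ofReal (μ (g t))) :
    ∀ᵐ ω ∂Pr, ∀ ι : Fin m → S, Function.Injective ι →
      ∃ a b : Fin m, a ≠ b ∧
        ∃ t : ℕ, comps (fun n => F n ω) t (ι a) = comps (fun n => F n ω) t (ι b) :=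
  coalescence_classes_lt_of_invariant_large_general Pr P hnn hrow hirr π hπpos hπsum hπinv m hm s hs
    μ hμ F hiid
end

section
/- (Kemeny–Snell lumpability criterion) Let P be a stochastic matrix on finite S and 𝒮 = {S_1,…,S_ℓ} a partition of S. For i ∈ S_r and s ∈ {1,…,ℓ} set λ^{(i)}_{r,s} = Σ_{j ∈ S_s} p_{i,j}. The Markov chain with transition matrix P is 𝒮-lumpable (i.e., the induced block process W_t = (index of block containing X_t) is a Markov chain for every initial distribution) if and only if for every r, s, the quantity λ^{(i)}_{r,s} is constant over i ∈ S_r. -/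
open Finset

/-- The probability of the trajectory `x_0, x_1, …, x_n` for a Markov chain with
transition matrix `P` and initial distribution `ν`. -/
noncomputable def pathProb {S : Type*} [Fintype S] (P : Matrix S S ℝ) (ν : S → ℝ)
    {n : ℕ} (x : Fin (n + 1) → S) : ℝ :=
  ν (x 0) * ∏ k : Fin n, P (x k.castSucc) (x k.succ)

/-- The probability that the chain follows the sequence of blocks `w_0, …, w_n`, where the
blocks are the fibres of `c : S → B`. -/
noncomputable def blockProb {S B : Type*} [Fintype S] [DecidableEq B]
    (P : Matrix S S ℝ) (c : S → B) (ν : S → ℝ) {n : ℕ} (w : Fin (n + 1) → B) : ℝ :=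
  ∑ x : Fin (n + 1) → S, if ∀ k, c (x k) = w k then pathProb P ν x else 0

section aux
variable {S B : Type*} [Fintype S] [Fintype B] [DecidableEq B]

lemma pathProb_snoc (P : Matrix S S ℝ) (ν : S → ℝ) {n : ℕ} (y : Fin (n + 1) → S) (j : S) :
    pathProb P ν (Fin.snoc y j) = pathProb P ν y * P (y (Fin.last n)) j := by
  unfold pathProb
  rw [Fin.prod_univ_castSucc]
  have h0 : (Fin.snoc y j : Fin (n + 2) → S) 0 = y 0 := by
    rw [show (0 : Fin (n + 2)) = Fin.castSucc 0 from rfl, Fin.snoc_castSucc]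
  simp only [h0, Fin.snoc_castSucc, Fin.succ_castSucc, Fin.succ_last, Fin.snoc_last]
  ring

def snocEquivFun (n : ℕ) : ((Fin (n + 1) → S) × S) ≃ (Fin (n + 2) → S) where
  toFun p := Fin.snoc p.1 p.2
  invFun x := (Fin.init x, x (Fin.last (n + 1)))
  left_inv p := by simp [Fin.init_snoc, Fin.snoc_last]
  right_inv x := by simp [Fin.snoc_init_self]

lemma blockProb_snoc (P : Matrix S S ℝ) (c : S → B) (ν : S → ℝ) {n : ℕ}
    (w : Fin (n + 1) → B) (s : B) :
    blockProb P c ν (Fin.snoc w s) =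
      ∑ y : Fin (n + 1) → S, (if ∀ k, c (y k) = w k then
        pathProb P ν y * (∑ j, if c j = s then P (y (Fin.last n)) j else 0) else 0) := by
  unfold blockProb
  rw [← (snocEquivFun n).sum_comp (ι := _)]
  rw [Fintype.sum_prod_type]
  refine Finset.sum_congr rfl fun y _ => ?_
  have hcond : ∀ j : S, ((∀ k : Fin (n + 2), c ((snocEquivFun n (y, j)) k) = (Fin.snoc w s : Fin (n + 2) → B) k)
      ↔ ((∀ k : Fin (n + 1), c (y k) = w k) ∧ c j = s)) := by
    intro j
    constructor
    · intro h
      refine ⟨fun k => ?_, ?_⟩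
      · have := h k.castSucc
        simpa [snocEquivFun, Fin.snoc_castSucc] using this
      · have := h (Fin.last (n + 1))
        simpa [snocEquivFun, Fin.snoc_last] using this
    · rintro ⟨h1, h2⟩ k
      refine Fin.lastCases ?_ ?_ k
      · simpa [snocEquivFun, Fin.snoc_last] using h2
      · intro k; simpa [snocEquivFun, Fin.snoc_castSucc] using h1 k
  by_cases hy : ∀ k, c (y k) = w k
  · rw [if_pos hy]
    have key : ∀ j : S,
        (if ∀ k : Fin (n + 2), c ((snocEquivFun n (y, j)) k) = (Fin.snoc w s : Fin (n + 2) → B) k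
          then pathProb P ν ((snocEquivFun n) (y, j)) else 0)
        = pathProb P ν y * (if c j = s then P (y (Fin.last n)) j else 0) := by
      intro j
      have hp : pathProb P ν ((snocEquivFun n) (y, j))
          = pathProb P ν y * P (y (Fin.last n)) j := by
        simpa [snocEquivFun] using pathProb_snoc P ν y j
      rw [if_congr (hcond j) rfl rfl, hp]
      by_cases hj : c j = s
      · rw [if_pos ⟨hy, hj⟩, if_pos hj]
      · rw [if_neg (fun h => hj h.2), if_neg hj]; ring
    rw [Finset.sum_congr rfl fun j _ => key j, ← Finset.mul_sum]
  · rw [if_neg hy]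
    refine Finset.sum_eq_zero fun j _ => ?_
    rw [if_congr (hcond j) rfl rfl, if_neg (fun h => hy h.1)]

end aux

/-- Kemeny–Snell: the chain with stochastic transition matrix `P` is lumpable
with respect to the partition given by the fibres of the surjection `c : S → B` — i.e. the
block process is a Markov chain with a transition matrix `Λ` not depending on the initial
distribution — if and only if the block row-sums `λ^{(i)}_{r,s} = Σ_{j : c j = s} p_{i,j}`
are constant over `i` in each block. -/
theorem lumpable_iff_block_row_sums_constant
    {S B : Type*} [Fintype S] [DecidableEq S] [Nonempty S] [Fintype B] [DecidableEq B]
    (P : Matrix S S ℝ) (hnn : ∀ i j, 0 ≤ P i j) (hrow : ∀ i, ∑ j, P i j = 1)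
    (c : S → B) (hc : Function.Surjective c) :
    (∃ Λ : Matrix B B ℝ, ∀ ν : S → ℝ, (∀ i, 0 ≤ ν i) → (∑ i, ν i = 1) →
        ∀ (n : ℕ) (w : Fin (n + 1) → B) (s : B),
          blockProb P c ν (Fin.snoc w s) = blockProb P c ν w * Λ (w (Fin.last n)) s) ↔
      (∀ i i' : S, c i = c i' → ∀ s : B,
        (∑ j, if c j = s then P i j else 0) = ∑ j, if c j = s then P i' j else 0) := by
  constructor
  · rintro ⟨Λ, hΛ⟩ i i' hii' s
    have key : ∀ a : S, (∑ j, if c j = s then P a j else 0) = Λ (c a) s := by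
      intro a
      set ν : S → ℝ := fun k => if k = a then 1 else 0 with hν
      have hν0 : ∀ k, 0 ≤ ν k := fun k => by by_cases h : k = a <;> simp [hν, h]
      have hν1 : ∑ k, ν k = 1 := by simp [hν]
      have h := hΛ ν hν0 hν1 0 (fun _ => c a) s
      have hb1 : blockProb P c ν (fun _ : Fin 1 => c a) = 1 := by
        unfold blockProb pathProb
        rw [← (Equiv.funUnique (Fin 1) S).symm.sum_comp]
        rw [Finset.sum_eq_single a]
        · simp [hν, Equiv.funUnique]
        · intro b _ hb; simp [hν, hb, Equiv.funUnique]
        · simp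
      have hb2 : blockProb P c ν (Fin.snoc (fun _ : Fin 1 => c a) s)
          = ∑ j, if c j = s then P a j else 0 := by
        rw [blockProb_snoc]
        rw [← (Equiv.funUnique (Fin 1) S).symm.sum_comp]
        rw [Finset.sum_eq_single a]
        · simp [pathProb, hν, Equiv.funUnique]
        · intro b _ hb; simp [pathProb, hν, hb, Equiv.funUnique]
        · simp
      rw [hb1, hb2] at h
      simpa using h
    rw [key i, key i', hii']
  · intro hcon
    refine ⟨fun r s => ∑ j, if c j = s then P (Function.surjInv hc r) j else 0, ?_⟩
    intro ν _ _ n w s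
    rw [blockProb_snoc]
    unfold blockProb
    rw [Finset.sum_mul]
    refine Finset.sum_congr rfl fun y _ => ?_
    by_cases hy : ∀ k, c (y k) = w k
    · rw [if_pos hy, if_pos hy]
      have h1 : c (y (Fin.last n)) = c (Function.surjInv hc (w (Fin.last n))) := by
        rw [hy (Fin.last n), Function.surjInv_eq hc]
      rw [hcon _ _ h1 s]
    · rw [if_neg hy, if_neg hy, zero_mul]
end

section
/- If μ is an 𝒮-block measure on F_S with blocks S_1,…,S_ℓ, then almost surely the coalescence classes of the associated coupled chains are exactly the blocks S_1,…,S_ℓ. -/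
open Finset MeasureTheory

/-- States `i` and `j` coalesce under the sequence of functions `f`. -/
def Coalesces {S : Type*} (f : ℕ → S → S) (i j : S) : Prop :=
  ∃ t : ℕ, comps f t i = comps f t j

/-- `μ` is a block measure with blocks the fibres of the surjection `c : S → Fin ℓ`:
(a) every function in the support of `μ` permutes the blocks, and
(b) the number of coalescence classes is a.s. `ℓ`. -/
def IsBlockMeasure {S : Type*} {Ω : Type*} [MeasurableSpace Ω] (Pr : Measure Ω)
    (F : ℕ → Ω → S → S) (μ : (S → S) → ℝ) {ℓ : ℕ} (c : S → Fin ℓ) : Prop :=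
  Function.Surjective c ∧
  (∀ f : S → S, μ f ≠ 0 → ∃ π : Equiv.Perm (Fin ℓ), ∀ i, c (f i) = π (c i)) ∧
  (∀ᵐ ω ∂Pr, ∃ g : S → Fin ℓ, Function.Surjective g ∧
      ∀ i j, Coalesces (fun n => F n ω) i j ↔ g i = g j)

def PermutesFibres {S α : Type*} (c : S → α) (f : S → S) : Prop :=
  ∃ π : Equiv.Perm α, ∀ i, c (f i) = π (c i)

namespace PermutesFibres

variable {S α : Type*} {c : S → α}

theorem id : PermutesFibres c id := ⟨1, fun _ => rfl⟩

theorem comp {f g : S → S} (hf : PermutesFibres c f) (hg : PermutesFibres c g) :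
    PermutesFibres c (f ∘ g) := by
  obtain ⟨π, hπ⟩ := hf
  obtain ⟨σ, hσ⟩ := hg
  exact ⟨σ.trans π, fun i => by simp only [Function.comp_apply, hπ, hσ, Equiv.trans_apply]⟩

theorem comps {f : ℕ → S → S} (hf : ∀ t, PermutesFibres c (f t)) :
    ∀ t, PermutesFibres c (comps f t)
  | 0 => id
  | t + 1 => (hf t).comp (comps hf t)

theorem apply_eq_apply_iff {f : S → S} (hf : PermutesFibres c f) {i j : S} :
    c (f i) = c (f j) ↔ c i = c j := by
  obtain ⟨π, hπ⟩ := hf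
  rw [hπ, hπ, π.apply_eq_iff_eq]

end PermutesFibres

theorem Coalesces.apply_eq_of_permutesFibres {S α : Type*} {c : S → α} {f : ℕ → S → S}
    (hf : ∀ t, PermutesFibres c (f t)) {i j : S} (hij : Coalesces f i j) : c i = c j := by
  obtain ⟨t, ht⟩ := hij
  exact ((PermutesFibres.comps hf t).apply_eq_apply_iff).1 (congrArg c ht)

theorem apply_eq_apply_of_refines_of_surjective {S α : Type*} [Finite α] {c g : S → α}
    (hc : Function.Surjective c) (hg : Function.Surjective g)
    (hrefine : ∀ i j, g i = g j → c i = c j) {i j : S} (hij : c i = c j) : g i = g j := by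
  obtain ⟨s, hs⟩ := hg.hasRightInverse
  have hfactor : ∀ i, c i = c (s (g i)) := fun i => hrefine _ _ (hs (g i)).symm
  have hsurj : Function.Surjective (c ∘ s) := fun k => by
    obtain ⟨i, rfl⟩ := hc k
    exact ⟨g i, (hfactor i).symm⟩
  exact Finite.injective_iff_surjective.2 hsurj (by simpa only [Function.comp_apply,
    ← hfactor] using hij)

theorem ae_ne_zero_of_measure_fibre_eq {Ω β : Type*} [MeasurableSpace Ω] [Countable β]
    {Pr : Measure Ω} {X : Ω → β} {p : β → ℝ}
    (hX : ∀ b, Pr {ω | X ω = b} = ENNReal.ofReal (p b)) : ∀ᵐ ω ∂Pr, p (X ω) ≠ 0 := by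
  rw [ae_iff]
  simp only [not_not]
  have hsub : {ω | p (X ω) = 0} ⊆ ⋃ b ∈ {b | p b = 0}, {ω | X ω = b} := fun ω hω =>
    Set.mem_biUnion (x := X ω) hω rfl
  refine measure_mono_null hsub ((measure_biUnion_null_iff (Set.to_countable _)).2 ?_)
  intro b hb
  rw [hX, show p b = 0 from hb, ENNReal.ofReal_zero]

theorem blockMeasure_classes_are_blocks_general {S : Type*} [Fintype S]
    {Ω : Type*} [MeasurableSpace Ω] (Pr : Measure Ω)
    (μ : (S → S) → ℝ)
    (F : ℕ → Ω → S → S)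
    (hiid : ∀ (T : Finset ℕ) (g : ℕ → S → S),
      Pr {ω | ∀ t ∈ T, F t ω = g t} = ∏ t ∈ T, ENNReal.ofReal (μ (g t)))
    {ℓ : ℕ} (c : S → Fin ℓ) (hblock : IsBlockMeasure Pr F μ c) :
    ∀ᵐ ω ∂Pr, ∀ i j, Coalesces (fun n => F n ω) i j ↔ c i = c j := by
  obtain ⟨hc, hperm, hclasses⟩ := hblock
  have hsupp : ∀ᵐ ω ∂Pr, ∀ t, μ (F t ω) ≠ 0 := ae_all_iff.2 fun t =>
    ae_ne_zero_of_measure_fibre_eq fun g => by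
      simpa only [Finset.mem_singleton, forall_eq, Finset.prod_singleton]
        using hiid {t} fun _ => g
  filter_upwards [hsupp, hclasses] with ω hω ⟨g, hg, hcoal⟩
  have hblocks : ∀ i j, Coalesces (fun n => F n ω) i j → c i = c j := fun _ _ =>
    Coalesces.apply_eq_of_permutesFibres fun t => hperm _ (hω t)
  have hrefine : ∀ i j, g i = g j → c i = c j := fun i j h => hblocks i j ((hcoal i j).2 h)
  exact fun i j => ⟨hblocks i j, fun hij =>
    (hcoal i j).2 (apply_eq_apply_of_refines_of_surjective hc hg hrefine hij)⟩

/-- if `μ` is an `𝒮`-block measure with blocks the fibres of `c`, then almost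
surely the coalescence classes of the coupled chains are exactly the blocks. -/
theorem blockMeasure_classes_are_blocks {S : Type*} [Fintype S] [DecidableEq S] [Nonempty S]
    {Ω : Type*} [MeasurableSpace Ω] (Pr : Measure Ω) [IsProbabilityMeasure Pr]
    (μ : (S → S) → ℝ) (hμnn : ∀ g, 0 ≤ μ g) (hμsum : ∑ g, μ g = 1)
    (F : ℕ → Ω → S → S)
    (hiid : ∀ (T : Finset ℕ) (g : ℕ → S → S),
      Pr {ω | ∀ t ∈ T, F t ω = g t} = ∏ t ∈ T, ENNReal.ofReal (μ (g t)))
    {ℓ : ℕ} (c : S → Fin ℓ) (hblock : IsBlockMeasure Pr F μ c) :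
    ∀ᵐ ω ∂Pr, ∀ i j, Coalesces (fun n => F n ω) i j ↔ c i = c j :=
  blockMeasure_classes_are_blocks_general Pr μ F hiid c hblock
end

section
/- Let S be finite and 𝒢 ⊆ F_S. Every stochastic matrix on S is realizable by a probability measure supported on 𝒢 if and only if 𝒢 = F_S. In particular, for any f ∈ F_S there is a stochastic matrix P with p_{i,f(i)} > 1 − 1/|S| for all i, and every probability measure μ on F_S consistent with such a P must have f in its support. -/
/-!
The independence coupling `μ f = ∏ i, P i (f i)` realizes every stochastic matrix `P` by a
measure on all of `F_S`. Conversely, by the union bound the mass of `{g ≠ f}` is at most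
`∑ i, μ {g | g i ≠ f i} = ∑ i, (1 - P i (f i))`, which is `< 1` once every `P i (f i)` exceeds
`1 - 1/|S|`; so `f` carries positive mass. The deterministic matrix of `f` is such a `P`, hence
every `f` must lie in a support realizing all stochastic matrices.
-/

open Finset Matrix

namespace RandomMapping

variable {S : Type*} [Fintype S] [DecidableEq S]

def transitionMatrix (μ : (S → S) → ℝ) : Matrix S S ℝ :=
  fun i j => ∑ g : S → S, if g i = j then μ g else 0

lemma transitionMatrix_mem_rowStochastic {μ : (S → S) → ℝ} (hμ : μ ∈ stdSimplex ℝ (S → S)) :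
    transitionMatrix μ ∈ rowStochastic ℝ S := by
  refine mem_rowStochastic_iff_sum.2 ⟨fun i j => sum_nonneg fun g _ => ?_, fun i => ?_⟩
  · exact ite_nonneg (hμ.1 g) le_rfl
  · simp only [transitionMatrix]
    rw [sum_comm, ← hμ.2]
    simp

lemma transitionMatrix_single_apply_self (f : S → S) (i : S) :
    transitionMatrix (Pi.single f 1) i (f i) = 1 := by
  rw [transitionMatrix, sum_eq_single f (fun g _ hg => by simp [hg]) (by simp)]
  simp

lemma one_sub_inv_card_lt_transitionMatrix_single (f : S → S) (i : S) :
    1 - 1 / (Fintype.card S : ℝ) < transitionMatrix (Pi.single f 1) i (f i) := by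
  have : 0 < (Fintype.card S : ℝ) := by exact_mod_cast Fintype.card_pos_iff.2 ⟨i⟩
  simpa [transitionMatrix_single_apply_self] using this

lemma transitionMatrix_prod {P : Matrix S S ℝ} (hP : ∀ i, ∑ j, P i j = 1) :
    transitionMatrix (fun f => ∏ k, P k (f k)) = P := by
  ext i j
  -- `Q` is `P` with row `i` cut down to its entry `j`
  set Q : Matrix S S ℝ := fun k l => if k = i ∧ l ≠ j then 0 else P k l
  have hQ : ∀ f : S → S, ∏ k, Q k (f k) = if f i = j then ∏ k, P k (f k) else 0 := by
    intro f
    split_ifs with hf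
    · exact prod_congr rfl fun k _ => if_neg (by rintro ⟨rfl, hk⟩; exact hk hf)
    · exact prod_eq_zero (mem_univ i) (if_pos ⟨rfl, hf⟩)
  have hQrow : ∀ k, ∑ l, Q k l = if k = i then P i j else 1 := by
    intro k
    split_ifs with hk
    · subst hk; simp [Q]
    · simp [Q, hk, hP k]
  calc transitionMatrix (fun f => ∏ k, P k (f k)) i j = ∑ f : S → S, ∏ k, Q k (f k) := by
        simp only [transitionMatrix, hQ]
    _ = ∏ k, ∑ l, Q k l := (Fintype.prod_sum _).symm
    _ = P i j := by simp [hQrow]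

lemma prod_mem_stdSimplex {P : Matrix S S ℝ} (hP : P ∈ rowStochastic ℝ S) :
    (fun f : S → S => ∏ k, P k (f k)) ∈ stdSimplex ℝ (S → S) := by
  refine ⟨fun f => prod_nonneg fun k _ => nonneg_of_mem_rowStochastic hP, ?_⟩
  calc ∑ f : S → S, ∏ k, P k (f k) = ∏ k, ∑ l, P k l := (Fintype.prod_sum _).symm
    _ = 1 := by simp [sum_row_of_mem_rowStochastic hP]

lemma one_sub_transitionMatrix_apply {μ : (S → S) → ℝ} (hμ : ∑ g, μ g = 1) (i j : S) :
    1 - transitionMatrix μ i j = ∑ g : S → S, if g i = j then 0 else μ g := by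
  rw [← hμ, transitionMatrix, ← sum_sub_distrib]
  refine sum_congr rfl fun g _ => ?_
  split_ifs <;> ring

lemma sum_erase_le_sum_one_sub_transitionMatrix {μ : (S → S) → ℝ}
    (hμ : μ ∈ stdSimplex ℝ (S → S)) (f : S → S) :
    ∑ g ∈ univ.erase f, μ g ≤ ∑ i, (1 - transitionMatrix μ i (f i)) := by
  have hterm : ∀ g i, 0 ≤ if g i = f i then 0 else μ g := fun g i => ite_nonneg le_rfl (hμ.1 g)
  simp_rw [one_sub_transitionMatrix_apply hμ.2]
  rw [sum_comm]
  calc ∑ g ∈ univ.erase f, μ g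
      ≤ ∑ g ∈ univ.erase f, ∑ i, if g i = f i then 0 else μ g := by
        refine sum_le_sum fun g hg => ?_
        obtain ⟨i, hi⟩ := Function.ne_iff.1 (ne_of_mem_erase hg)
        simpa [hi] using single_le_sum (fun k _ => hterm g k) (mem_univ i)
    _ ≤ ∑ g, ∑ i, if g i = f i then 0 else μ g :=
        sum_le_sum_of_subset_of_nonneg (erase_subset _ _) fun g _ _ =>
          sum_nonneg fun i _ => hterm g i

lemma sum_one_sub_lt_one_of_one_sub_inv_card_lt {ι : Type*} [Fintype ι] {x : ι → ℝ}
    (hx : ∀ i, 1 - 1 / (Fintype.card ι : ℝ) < x i) : ∑ i, (1 - x i) < 1 := by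
  rcases isEmpty_or_nonempty ι with hι | hι
  · simp
  calc ∑ i, (1 - x i) < ∑ _i : ι, 1 / (Fintype.card ι : ℝ) :=
        sum_lt_sum_of_nonempty univ_nonempty fun i _ => by linarith [hx i]
    _ = 1 := by simp

lemma pos_of_one_sub_inv_card_lt_transitionMatrix {μ : (S → S) → ℝ}
    (hμ : μ ∈ stdSimplex ℝ (S → S)) {f : S → S}
    (hf : ∀ i, 1 - 1 / (Fintype.card S : ℝ) < transitionMatrix μ i (f i)) : 0 < μ f := by
  have hsplit := add_sum_erase univ μ (mem_univ f)
  linarith [sum_erase_le_sum_one_sub_transitionMatrix hμ f, hμ.2,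
    sum_one_sub_lt_one_of_one_sub_inv_card_lt hf]

end RandomMapping

open RandomMapping in
theorem realizable_eq_all_iff_univ_general {S : Type*} [Fintype S] [DecidableEq S]
    (𝒢 : Set (S → S)) :
    (({P : Matrix S S ℝ | ∃ μ : (S → S) → ℝ, (∀ f, 0 ≤ μ f) ∧ (∑ f, μ f = 1) ∧
          (∀ f, μ f ≠ 0 → f ∈ 𝒢) ∧
          ∀ i j, (∑ f : S → S, if f i = j then μ f else 0) = P i j} =
        {P : Matrix S S ℝ | (∀ i j, 0 ≤ P i j) ∧ ∀ i, ∑ j, P i j = 1}) ↔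
      𝒢 = Set.univ) ∧
    ∀ f : S → S,
      (∃ P : Matrix S S ℝ, (∀ i j, 0 ≤ P i j) ∧ (∀ i, ∑ j, P i j = 1) ∧
        ∀ i, 1 - 1 / (Fintype.card S : ℝ) < P i (f i)) ∧
      ∀ P : Matrix S S ℝ, (∀ i j, 0 ≤ P i j) → (∀ i, ∑ j, P i j = 1) →
        (∀ i, 1 - 1 / (Fintype.card S : ℝ) < P i (f i)) →
        ∀ μ : (S → S) → ℝ, (∀ g, 0 ≤ μ g) → (∑ g, μ g = 1) →
          (∀ i j, (∑ g : S → S, if g i = j then μ g else 0) = P i j) → μ f ≠ 0 := by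
  have dirac_stochastic (f : S → S) := mem_rowStochastic_iff_sum.1
    (transitionMatrix_mem_rowStochastic (single_mem_stdSimplex ℝ f))
  refine ⟨⟨fun h => Set.eq_univ_of_forall fun f => ?_, ?_⟩, fun f => ⟨⟨_, (dirac_stochastic f).1,
    (dirac_stochastic f).2, one_sub_inv_card_lt_transitionMatrix_single f⟩, ?_⟩⟩
  · obtain ⟨μ, hμ0, hμ1, h𝒢, hμP⟩ := h.superset (dirac_stochastic f)
    have hμ : transitionMatrix μ = transitionMatrix (Pi.single f 1) := Matrix.ext hμP
    exact h𝒢 f (pos_of_one_sub_inv_card_lt_transitionMatrix ⟨hμ0, hμ1⟩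
      (hμ ▸ one_sub_inv_card_lt_transitionMatrix_single f)).ne'
  · rintro rfl
    ext P
    refine ⟨fun ⟨μ, hμ0, hμ1, _, hμP⟩ => ?_, fun hP => ?_⟩
    · obtain rfl : transitionMatrix μ = P := Matrix.ext hμP
      exact mem_rowStochastic_iff_sum.1 (transitionMatrix_mem_rowStochastic ⟨hμ0, hμ1⟩)
    · obtain ⟨hμ0, hμ1⟩ := prod_mem_stdSimplex (mem_rowStochastic_iff_sum.2 hP)
      exact ⟨_, hμ0, hμ1, fun _ _ => trivial, fun i j =>
        congrFun₂ (transitionMatrix_prod hP.2) i j⟩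
  · intro P _ _ hf μ hμ0 hμ1 hμP
    obtain rfl : transitionMatrix μ = P := Matrix.ext hμP
    exact (pos_of_one_sub_inv_card_lt_transitionMatrix ⟨hμ0, hμ1⟩ hf).ne'

/-- for `𝒢 ⊆ F_S`, every stochastic matrix on `S` is realizable by a
probability measure supported on `𝒢` if and only if `𝒢 = F_S`. In particular, for every
`f ∈ F_S` there is a stochastic matrix `P` with `p_{i, f i} > 1 - 1/|S|` for all `i`, and
every probability measure consistent with such a `P` has `f` in its support. -/
theorem realizable_eq_all_iff_univ {S : Type*} [Fintype S] [DecidableEq S] [Nonempty S]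
    (𝒢 : Set (S → S)) :
    (({P : Matrix S S ℝ | ∃ μ : (S → S) → ℝ, (∀ f, 0 ≤ μ f) ∧ (∑ f, μ f = 1) ∧
          (∀ f, μ f ≠ 0 → f ∈ 𝒢) ∧
          ∀ i j, (∑ f : S → S, if f i = j then μ f else 0) = P i j} =
        {P : Matrix S S ℝ | (∀ i j, 0 ≤ P i j) ∧ ∀ i, ∑ j, P i j = 1}) ↔
      𝒢 = Set.univ) ∧
    ∀ f : S → S,
      (∃ P : Matrix S S ℝ, (∀ i j, 0 ≤ P i j) ∧ (∀ i, ∑ j, P i j = 1) ∧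
        ∀ i, 1 - 1 / (Fintype.card S : ℝ) < P i (f i)) ∧
      ∀ P : Matrix S S ℝ, (∀ i j, 0 ≤ P i j) → (∀ i, ∑ j, P i j = 1) →
        (∀ i, 1 - 1 / (Fintype.card S : ℝ) < P i (f i)) →
        ∀ μ : (S → S) → ℝ, (∀ g, 0 ≤ μ g) → (∑ g, μ g = 1) →
          (∀ i j, (∑ g : S → S, if g i = j then μ g else 0) = P i j) → μ f ≠ 0 :=
  realizable_eq_all_iff_univ_general 𝒢
end
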